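/- arXiv:2402.01154 — 4 statements merged into one kernel-verified Lean document; each statement's English description precedes it below -/
import Mathlib

section
/- Unbiasedness of the half-dithered quantizer (scalar case): Let Δ > 0 and y ∈ ℝ. If u is a random variable uniformly distributed on the interval (−1/2, 1/2), then the expectation over u of Δ·round(y/Δ + u) equals y. Equivalently, ∫_{−1/2}^{1/2} round(y/Δ + u)·Δ du = y. -/
open MeasureTheory intervalIntegral

lemma floor_intervalIntegrable (a b : ℝ) :
    IntervalIntegrable (fun v : ℝ => (⌊v⌋ : ℝ)) volume a b := by
  apply Monotone.intervalIntegrable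
  intro s t hst
  simp only []
  exact_mod_cast Int.floor_le_floor hst

lemma fract_intervalIntegrable (a b : ℝ) :
    IntervalIntegrable (fun v : ℝ => Int.fract v) volume a b := by
  have : (fun v : ℝ => Int.fract v) = fun v : ℝ => v - (⌊v⌋ : ℝ) := by
    funext v; rw [Int.fract]
  rw [this]
  exact (intervalIntegrable_id).sub (floor_intervalIntegrable a b)

lemma fract_integral_01 : (∫ v in (0:ℝ)..1, Int.fract v) = 1/2 := by
  have h : (∫ v in (0:ℝ)..1, Int.fract v) = ∫ v in (0:ℝ)..1, v := by
    apply intervalIntegral.integral_congr_ae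
    have h1 : volume ({(1:ℝ)} : Set ℝ) = 0 := measure_singleton 1
    filter_upwards [measure_eq_zero_iff_ae_notMem.mp h1] with v hv hmem
    rw [Set.uIoc_of_le (by norm_num : (0:ℝ) ≤ 1)] at hmem
    have hv1 : v < 1 := lt_of_le_of_ne hmem.2 (fun h => hv (by simp [h]))
    exact Int.fract_eq_self.mpr ⟨le_of_lt hmem.1, hv1⟩
  rw [h, integral_id]
  norm_num

lemma floor_integral (x : ℝ) : (∫ v in x..(x+1), (⌊v⌋ : ℝ)) = x := by
  have hper : Function.Periodic (fun v : ℝ => Int.fract v) 1 := by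
    intro v; exact Int.fract_add_one v
  have h1 : (∫ v in x..(x+1), Int.fract v) = ∫ v in (0:ℝ)..(0+1), Int.fract v :=
    hper.intervalIntegral_add_eq x 0
  have h2 : (∫ v in x..(x+1), Int.fract v) = 1/2 := by
    rw [h1]; rw [zero_add]; exact fract_integral_01
  have hfl : (fun v : ℝ => (⌊v⌋ : ℝ)) = fun v : ℝ => v - Int.fract v := by
    funext v; rw [Int.fract]; ring
  rw [hfl, intervalIntegral.integral_sub intervalIntegrable_id
    (fract_intervalIntegrable x (x+1)), integral_id, h2]
  ring

/-- Unbiasedness of the half-dithered quantizer (scalar case): for `Δ > 0` and `y ∈ ℝ`,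
the expectation over a uniform dither `u ∼ U(-1/2, 1/2)` of `Δ·round(y/Δ + u)` equals `y`,
i.e. `∫_{-1/2}^{1/2} Δ·round(y/Δ + u) du = y`. -/
theorem half_dithered_quantizer_unbiased (Δ y : ℝ) (hΔ : 0 < Δ) :
    (∫ u in (-(1/2) : ℝ)..(1/2), Δ * (round (y / Δ + u) : ℝ)) = y := by
  have key : (∫ u in (-(1/2) : ℝ)..(1/2), (round (y / Δ + u) : ℝ)) = y / Δ := by
    have hr : ∀ u : ℝ, ((round (y / Δ + u) : ℤ) : ℝ) = (⌊u + (y / Δ + 1/2)⌋ : ℝ) := by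
      intro u
      rw [round_eq]
      congr 1
      ring_nf
    calc (∫ u in (-(1/2) : ℝ)..(1/2), (round (y / Δ + u) : ℝ))
        = ∫ u in (-(1/2) : ℝ)..(1/2), (⌊u + (y / Δ + 1/2)⌋ : ℝ) := by
          apply intervalIntegral.integral_congr; intro u _; exact hr u
      _ = ∫ v in (-(1/2) + (y / Δ + 1/2))..(1/2 + (y / Δ + 1/2)), (⌊v⌋ : ℝ) :=
          intervalIntegral.integral_comp_add_right (fun v => (⌊v⌋ : ℝ)) (y / Δ + 1/2)
      _ = y / Δ := by
          have e1 : -(1/2) + (y / Δ + 1/2) = y / Δ := by ring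
          have e2 : 1/2 + (y / Δ + 1/2) = y / Δ + 1 := by ring
          rw [e1, e2]; exact floor_integral _
  rw [intervalIntegral.integral_const_mul, key]
  field_simp
end

section
/- Exact second moment of the half-dithered quantization error (scalar case): Let Δ > 0 and y ∈ ℝ, and let u be uniformly distributed on (−1/2, 1/2). Write f ∈ [0, 1/2] for the distance from y/Δ to the nearest integer. Then the expectation over u of (Δ·round(y/Δ + u) − y)² equals Δ²·f·(1 − f); in particular it is at most Δ²/4. -/
/-!
Write `y / Δ = n + t` with `n = round (y / Δ)` and `|t| = f ≤ 1/2`. Since rounding commutes with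
integer shifts, the error `round (y / Δ + u) - y / Δ` equals `round (t + u) - t`, a step function
of `u ∈ (-1/2, 1/2)` with a single jump: for `t ≥ 0` it is `-t` on an interval of length `1 - t`
and `1 - t` on one of length `t`, so its mean square is `(1 - t) t² + t (1 - t)² = t (1 - t)`;
the case `t < 0` is symmetric.
-/

open MeasureTheory Set intervalIntegral

lemma ae_restrict_uIoc_eq_of_eqOn_Ioo {α : Type*} {μ : Measure ℝ} [NullSingletonClass μ]
    {f g : ℝ → α} {a b : ℝ} (hab : a ≤ b) (h : EqOn f g (Ioo a b)) :
    f =ᵐ[μ.restrict (uIoc a b)] g := by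
  rw [uIoc_of_le hab, Filter.EventuallyEq, ← ae_restrict_congr_set Ioo_ae_eq_Ioc]
  exact (ae_restrict_mem measurableSet_Ioo).mono h

section StepFunctions

variable {E : Type*} [NormedAddCommGroup E] {f : ℝ → E} {a b c : ℝ} {C D : E}

lemma intervalIntegrable_of_eqOn_Ioo (hab : a ≤ b) (h : EqOn f (fun _ ↦ C) (Ioo a b)) :
    IntervalIntegrable f volume a b :=
  intervalIntegrable_const.congr_ae (ae_restrict_uIoc_eq_of_eqOn_Ioo hab h).symm

lemma integral_of_eqOn_Ioo [NormedSpace ℝ E] [CompleteSpace E] (hab : a ≤ b)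
    (h : EqOn f (fun _ ↦ C) (Ioo a b)) : ∫ x in a..b, f x = (b - a) • C := by
  rw [integral_congr_ae_restrict (ae_restrict_uIoc_eq_of_eqOn_Ioo hab h),
    intervalIntegral.integral_const]

lemma integral_of_eqOn_Ioo_of_eqOn_Ioo [NormedSpace ℝ E] [CompleteSpace E] (hac : a ≤ c)
    (hcb : c ≤ b) (hC : EqOn f (fun _ ↦ C) (Ioo a c)) (hD : EqOn f (fun _ ↦ D) (Ioo c b)) :
    ∫ x in a..b, f x = (c - a) • C + (b - c) • D := by
  rw [← integral_add_adjacent_intervals (intervalIntegrable_of_eqOn_Ioo hac hC)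
    (intervalIntegrable_of_eqOn_Ioo hcb hD), integral_of_eqOn_Ioo hac hC,
    integral_of_eqOn_Ioo hcb hD]

end StepFunctions

lemma round_eq_of_mem_Ioo {x : ℝ} {n : ℤ} (h : x ∈ Ioo (n - 1 / 2 : ℝ) (n + 1 / 2)) :
    round x = n :=
  round_eq_iff.mpr (Ioo_subset_Ico_self h)

lemma integral_sq_round_add_sub_of_abs_le {t : ℝ} (ht : |t| ≤ 1 / 2) :
    ∫ u in (-(1 / 2) : ℝ)..(1 / 2), ((round (t + u) : ℝ) - t) ^ 2 = |t| * (1 - |t|) := by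
  obtain ⟨ht₁, ht₂⟩ := abs_le.mp ht
  have round_eqOn (n : ℤ) {a b : ℝ} (ha : n - 1 / 2 ≤ t + a) (hb : t + b ≤ n + 1 / 2) :
      EqOn (fun u ↦ ((round (t + u) : ℝ) - t) ^ 2) (fun _ ↦ ((n : ℝ) - t) ^ 2) (Ioo a b) :=
    fun u hu ↦ by
      dsimp only
      rw [round_eq_of_mem_Ioo (x := t + u) (n := n) ⟨by linarith [hu.1], by linarith [hu.2]⟩]
  rcases le_or_gt 0 t with h₀ | h₀
  · rw [integral_of_eqOn_Ioo_of_eqOn_Ioo (c := 1 / 2 - t) (by linarith) (by linarith)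
      (round_eqOn 0 (by push_cast; linarith) (by push_cast; linarith))
      (round_eqOn 1 (by push_cast; linarith) (by push_cast; linarith)), abs_of_nonneg h₀]
    simp only [smul_eq_mul, Int.cast_zero, Int.cast_one]
    ring
  · rw [integral_of_eqOn_Ioo_of_eqOn_Ioo (c := -(1 / 2) - t) (by linarith) (by linarith)
      (round_eqOn (-1) (by push_cast; linarith) (by push_cast; linarith))
      (round_eqOn 0 (by push_cast; linarith) (by push_cast; linarith)), abs_of_neg h₀]
    simp only [smul_eq_mul, Int.cast_neg, Int.cast_zero, Int.cast_one]
    ring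

lemma integral_sq_round_add_sub (x : ℝ) :
    ∫ u in (-(1 / 2) : ℝ)..(1 / 2), ((round (x + u) : ℝ) - x) ^ 2
      = |x - round x| * (1 - |x - round x|) := by
  have shift (u : ℝ) : (round (x + u) : ℝ) - x = round (x - round x + u) - (x - round x) := by
    rw [show x + u = x - round x + u + round x by ring, round_add_intCast]
    push_cast
    ring
  simp only [shift]
  exact integral_sq_round_add_sub_of_abs_le (abs_sub_round x)

/-- Exact second moment of the half-dithered quantization error (scalar case):
with `Δ > 0`, `y ∈ ℝ`, a uniform dither `u ∼ U(-1/2, 1/2)`, and `f` the distance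
from `y/Δ` to the nearest integer, the expected squared error
`E[(Δ·round(y/Δ + u) − y)²]` equals `Δ²·f·(1 − f)`, which is at most `Δ²/4`. -/
theorem half_dithered_quantizer_second_moment (Δ y f : ℝ) (hΔ : 0 < Δ)
    (hf : f = |y / Δ - (round (y / Δ) : ℝ)|) :
    (∫ u in (-(1/2) : ℝ)..(1/2), (Δ * (round (y / Δ + u) : ℝ) - y) ^ 2)
      = Δ ^ 2 * f * (1 - f) ∧
    (∫ u in (-(1/2) : ℝ)..(1/2), (Δ * (round (y / Δ + u) : ℝ) - y) ^ 2) ≤ Δ ^ 2 / 4 := by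
  have scale (u : ℝ) : (Δ * (round (y / Δ + u) : ℝ) - y) ^ 2
      = Δ ^ 2 * ((round (y / Δ + u) : ℝ) - y / Δ) ^ 2 := by
    field_simp
  have moment : (∫ u in (-(1/2) : ℝ)..(1/2), (Δ * (round (y / Δ + u) : ℝ) - y) ^ 2)
      = Δ ^ 2 * f * (1 - f) := by
    simp only [scale, intervalIntegral.integral_const_mul, integral_sq_round_add_sub, hf]
    ring
  refine ⟨moment, moment ▸ ?_⟩
  nlinarith [mul_nonneg (sq_nonneg Δ) (sq_nonneg (f - 1 / 2))]
end

section
/- One-step descent inequality for FLAG: Let F : ℝ^d → ℝ be differentiable with ν-Lipschitz gradient (ν > 0), let θ ∈ ℝ^d, let N be a positive integer, let η > 0, and let G be a square-integrable random vector in ℝ^d satisfying E[G] = N·∇F(θ) and E[‖G‖²] ≤ N²·‖∇F(θ)‖² + N·σ²/B + d·N·C²/2^{2b}, where σ, C ≥ 0, B ≥ 1 and b ≥ 1. Then E[F(θ − (η/N)·G)] ≤ F(θ) + (−η + ν·η²/2)·‖∇F(θ)‖² + ν·η²·σ²/(2·B·N) + d·ν·η²·C²/(2·2^{2b}·N). In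 particular, if η ≤ 1/ν, then E[F(θ − (η/N)·G)] ≤ F(θ) − (η/2)·‖∇F(θ)‖² + η·σ²/(2·B·N) + d·η·C²/(2·2^{2b}·N). -/
/-!
Along the segment from `x` to `y`, the derivative of `F` deviates from `⟪∇F x, y - x⟫` by at
most `ν t ‖y - x‖²` at time `t`, so comparison with `ν t² ‖y - x‖² / 2` gives the two-sided
descent inequality (the lower half is what makes `F (θ - s • G)` integrable). Applied
to the step `θ - (η/N) • G` and averaged, the linear term becomes `-η ‖∇F θ‖²` by unbiasedness,
and the quadratic term is controlled by the second-moment bound on `G`.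
-/

open MeasureTheory
open scoped RealInnerProductSpace

section

variable {E : Type*} [NormedAddCommGroup E] [InnerProductSpace ℝ E] [CompleteSpace E]
  {F : E → ℝ} {ν : ℝ}

theorem abs_sub_sub_inner_gradient_le (hF : Differentiable ℝ F)
    (hlip : ∀ x y, ‖gradient F x - gradient F y‖ ≤ ν * ‖x - y‖) (x y : E) :
    |F y - F x - ⟪gradient F x, y - x⟫| ≤ ν / 2 * ‖y - x‖ ^ 2 := by
  set v := y - x
  have hφ : ∀ t : ℝ, HasDerivAt (fun t => F (x + t • v) - F x - t * ⟪gradient F x, v⟫)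
      ⟪gradient F (x + t • v) - gradient F x, v⟫ t := by
    intro t
    have hline : HasDerivAt (fun t : ℝ => x + t • v) v t :=
      ((hasDerivAt_id t).smul_const v).const_add x |>.congr_deriv (one_smul ℝ v)
    have hFline := (hF (x + t • v)).hasGradientAt.hasFDerivAt.comp_hasDerivAt t hline
    refine ((hFline.sub_const (F x)).sub ((hasDerivAt_id t).mul_const _)).congr_deriv ?_
    rw [InnerProductSpace.toDual_apply_apply, inner_sub_left, one_mul]
  have hB : ∀ t : ℝ, HasDerivAt (fun t => ν / 2 * t ^ 2 * ‖v‖ ^ 2) (ν * t * ‖v‖ ^ 2) t :=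
    fun t => (((hasDerivAt_pow 2 t).const_mul (ν / 2)).mul_const (‖v‖ ^ 2)).congr_deriv
      (by push_cast; ring)
  have hbound : ∀ t ∈ Set.Ico (0 : ℝ) 1,
      ‖⟪gradient F (x + t • v) - gradient F x, v⟫‖ ≤ ν * t * ‖v‖ ^ 2 := by
    rintro t ⟨ht, -⟩
    calc ‖⟪gradient F (x + t • v) - gradient F x, v⟫‖
        ≤ ‖gradient F (x + t • v) - gradient F x‖ * ‖v‖ := norm_inner_le_norm _ _
      _ ≤ ν * ‖t • v‖ * ‖v‖ := by
          gcongr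
          simpa using hlip (x + t • v) x
      _ = ν * t * ‖v‖ ^ 2 := by rw [norm_smul, Real.norm_of_nonneg ht]; ring
  simpa [v] using image_norm_le_of_norm_deriv_right_le_deriv_boundary
    (fun t _ => (hφ t).continuousAt.continuousWithinAt) (fun t _ => (hφ t).hasDerivWithinAt)
    (by simp) hB hbound (Set.right_mem_Icc.2 zero_le_one)

theorem abs_comp_sub_smul_sub_le (hF : Differentiable ℝ F)
    (hlip : ∀ x y, ‖gradient F x - gradient F y‖ ≤ ν * ‖x - y‖) (θ g : E) (s : ℝ) :
    |F (θ - s • g) - (F θ - s * ⟪gradient F θ, g⟫)| ≤ ν / 2 * s ^ 2 * ‖g‖ ^ 2 := by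
  have h := abs_sub_sub_inner_gradient_le hF hlip θ (θ - s • g)
  rw [sub_sub_cancel_left, inner_neg_right, real_inner_smul_right, norm_neg, norm_smul,
    mul_pow, Real.norm_eq_abs, sq_abs, sub_neg_eq_add, ← mul_assoc] at h
  convert h using 2
  ring

variable {Ω : Type*} [MeasurableSpace Ω] {μ : Measure Ω} {G : Ω → E}

theorem integrable_comp_sub_smul [IsFiniteMeasure μ] (hF : Differentiable ℝ F)
    (hlip : ∀ x y, ‖gradient F x - gradient F y‖ ≤ ν * ‖x - y‖) (hG : MemLp G 2 μ)
    (θ : E) (s : ℝ) : Integrable (fun ω => F (θ - s • G ω)) μ := by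
  have hG1 : Integrable G μ := hG.integrable one_le_two
  have hlin : Integrable (fun ω => F θ - s * ⟪gradient F θ, G ω⟫) μ :=
    (integrable_const _).sub ((hG1.const_inner _).const_mul s)
  have hrem : Integrable (fun ω => F (θ - s • G ω) - (F θ - s * ⟪gradient F θ, G ω⟫)) μ := by
    refine ((hG.integrable_norm_pow two_ne_zero).const_mul (ν / 2 * s ^ 2)).mono' ?_
      (ae_of_all _ fun ω => abs_comp_sub_smul_sub_le hF hlip θ (G ω) s)
    exact (hF.continuous.comp_aestronglyMeasurable
      (aestronglyMeasurable_const.sub (hG1.aestronglyMeasurable.const_smul s))).sub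
      hlin.aestronglyMeasurable
  exact (hrem.add hlin).congr (ae_of_all _ fun ω => sub_add_cancel _ _)

theorem integral_comp_sub_smul_le [IsProbabilityMeasure μ] (hF : Differentiable ℝ F)
    (hlip : ∀ x y, ‖gradient F x - gradient F y‖ ≤ ν * ‖x - y‖) (hG : MemLp G 2 μ)
    (θ : E) (s : ℝ) :
    ∫ ω, F (θ - s • G ω) ∂μ
      ≤ F θ - s * ⟪gradient F θ, ∫ ω, G ω ∂μ⟫ + ν / 2 * s ^ 2 * ∫ ω, ‖G ω‖ ^ 2 ∂μ := by
  have hG1 : Integrable G μ := hG.integrable one_le_two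
  have hlin : Integrable (fun ω => F θ - s * ⟪gradient F θ, G ω⟫) μ :=
    (integrable_const _).sub ((hG1.const_inner _).const_mul s)
  have hquad : Integrable (fun ω => ν / 2 * s ^ 2 * ‖G ω‖ ^ 2) μ :=
    (hG.integrable_norm_pow two_ne_zero).const_mul _
  calc ∫ ω, F (θ - s • G ω) ∂μ
      ≤ ∫ ω, (F θ - s * ⟪gradient F θ, G ω⟫ + ν / 2 * s ^ 2 * ‖G ω‖ ^ 2) ∂μ :=
        integral_mono (integrable_comp_sub_smul hF hlip hG θ s) (hlin.add hquad) fun ω =>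
          sub_le_iff_le_add'.1 (abs_le.1 (abs_comp_sub_smul_sub_le hF hlip θ (G ω) s)).2
    _ = _ := by
        rw [integral_add hlin hquad, integral_sub (integrable_const _)
          ((hG1.const_inner _).const_mul s), integral_const_mul, integral_const_mul,
          integral_inner hG1, integral_const, probReal_univ, one_smul]

end

theorem flag_one_step_descent_general {Ω : Type*} [MeasurableSpace Ω]
    (μ : Measure Ω) [IsProbabilityMeasure μ]
    (d : ℕ) (F : EuclideanSpace ℝ (Fin d) → ℝ) (ν : ℝ) (hν : 0 < ν)
    (hF : Differentiable ℝ F)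
    (hlip : ∀ x y, ‖gradient F x - gradient F y‖ ≤ ν * ‖x - y‖)
    (θ : EuclideanSpace ℝ (Fin d)) (N : ℕ) (hN : 0 < N) (η : ℝ) (hη : 0 < η)
    (σ C : ℝ) (B b : ℕ)
    (G : Ω → EuclideanSpace ℝ (Fin d)) (hL2 : MemLp G 2 μ)
    (hmean : ∫ ω, G ω ∂μ = (N : ℝ) • gradient F θ)
    (hsecond : ∫ ω, ‖G ω‖ ^ 2 ∂μ
      ≤ (N : ℝ) ^ 2 * ‖gradient F θ‖ ^ 2 + N * σ ^ 2 / B + d * N * C ^ 2 / 2 ^ (2 * b)) :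
    (∫ ω, F (θ - (η / N) • G ω) ∂μ)
      ≤ F θ + (-η + ν * η ^ 2 / 2) * ‖gradient F θ‖ ^ 2
        + ν * η ^ 2 * σ ^ 2 / (2 * B * N) + d * ν * η ^ 2 * C ^ 2 / (2 * 2 ^ (2 * b) * N) ∧
    (η ≤ 1 / ν →
      (∫ ω, F (θ - (η / N) • G ω) ∂μ)
        ≤ F θ - (η / 2) * ‖gradient F θ‖ ^ 2
          + η * σ ^ 2 / (2 * B * N) + d * η * C ^ 2 / (2 * 2 ^ (2 * b) * N)) := by
  have hN' : (N : ℝ) ≠ 0 := by positivity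
  have step := integral_comp_sub_smul_le hF hlip hL2 θ (η / N)
  rw [hmean, real_inner_smul_right, real_inner_self_eq_norm_sq] at step
  have first := step.trans <| calc
    _ ≤ F θ - η / N * (N * ‖gradient F θ‖ ^ 2) + ν / 2 * (η / N) ^ 2
          * ((N : ℝ) ^ 2 * ‖gradient F θ‖ ^ 2 + N * σ ^ 2 / B + d * N * C ^ 2 / 2 ^ (2 * b)) := by
        gcongr
    _ = F θ + (-η + ν * η ^ 2 / 2) * ‖gradient F θ‖ ^ 2 + ν * η ^ 2 * σ ^ 2 / (2 * B * N)
          + d * ν * η ^ 2 * C ^ 2 / (2 * 2 ^ (2 * b) * N) := by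
        field_simp
        ring
  refine ⟨first, fun hη1 => first.trans ?_⟩
  have hνη : ν * η ≤ 1 := by rwa [le_div_iff₀ hν, mul_comm] at hη1
  have hP : 0 ≤ ‖gradient F θ‖ ^ 2 / 2 + σ ^ 2 / (2 * B * N)
      + d * C ^ 2 / (2 * 2 ^ (2 * b) * N) := by positivity
  linear_combination (1 - ν * η) * η * hP

/-- One-step descent inequality for FLAG: if `F` is differentiable with `ν`-Lipschitz
gradient and the aggregated gradient `G` is unbiased for `N·∇F(θ)` with second moment
at most `N²·‖∇F(θ)‖² + N·σ²/B + d·N·C²/2^{2b}`, then one SGD step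
`θ ↦ θ − (η/N)·G` satisfies the stated expected descent inequality, and moreover the
simplified bound when `η ≤ 1/ν`. -/
theorem flag_one_step_descent {Ω : Type*} [MeasurableSpace Ω]
    (μ : Measure Ω) [IsProbabilityMeasure μ]
    (d : ℕ) (F : EuclideanSpace ℝ (Fin d) → ℝ) (ν : ℝ) (hν : 0 < ν)
    (hF : Differentiable ℝ F)
    (hlip : ∀ x y, ‖gradient F x - gradient F y‖ ≤ ν * ‖x - y‖)
    (θ : EuclideanSpace ℝ (Fin d)) (N : ℕ) (hN : 0 < N) (η : ℝ) (hη : 0 < η)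
    (σ C : ℝ) (hσ : 0 ≤ σ) (hC : 0 ≤ C) (B b : ℕ) (hB : 1 ≤ B) (hb : 1 ≤ b)
    (G : Ω → EuclideanSpace ℝ (Fin d)) (hL2 : MemLp G 2 μ)
    (hmean : ∫ ω, G ω ∂μ = (N : ℝ) • gradient F θ)
    (hsecond : ∫ ω, ‖G ω‖ ^ 2 ∂μ
      ≤ (N : ℝ) ^ 2 * ‖gradient F θ‖ ^ 2 + N * σ ^ 2 / B + d * N * C ^ 2 / 2 ^ (2 * b)) :
    (∫ ω, F (θ - (η / N) • G ω) ∂μ)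
      ≤ F θ + (-η + ν * η ^ 2 / 2) * ‖gradient F θ‖ ^ 2
        + ν * η ^ 2 * σ ^ 2 / (2 * B * N) + d * ν * η ^ 2 * C ^ 2 / (2 * 2 ^ (2 * b) * N) ∧
    (η ≤ 1 / ν →
      (∫ ω, F (θ - (η / N) • G ω) ∂μ)
        ≤ F θ - (η / 2) * ‖gradient F θ‖ ^ 2
          + η * σ ^ 2 / (2 * B * N) + d * η * C ^ 2 / (2 * 2 ^ (2 * b) * N)) :=
  flag_one_step_descent_general μ d F ν hν hF hlip θ N hN η hη σ C B b G hL2 hmean hsecond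
end

section
/- Convergence of FLAG (Theorem 1): Let F : ℝ^d → ℝ be differentiable with ν-Lipschitz gradient and bounded below by F* = F(θ*), let N, B, b, T be positive integers, σ, C ≥ 0, and 0 < η ≤ 1/ν. Let θ₀ ∈ ℝ^d be deterministic and let (θ_t)_{t=0}^{T} and (G_t)_{t=0}^{T−1} be random vectors in ℝ^d on a probability space, with F(θ_t), ‖∇F(θ_t)‖² and ‖G_t‖² integrable, satisfying the update θ_{t+1} = θ_t − (η/N)·G_t almost surely and, for each t: E[⟨∇F(θ_t), G_t⟩] = N·E[‖∇F(θ_t)‖²] and E[‖G_t‖²] ≤ N²·E[‖∇F(θ_t)‖²] + N·σ²/B + d·N·C²/2^{2b}. Then (1/T)·Σ_{t=0}^{T−1} E[‖∇F(θ_t)‖²] ≤ 2·(F(θ₀) − F*)/(T·η) + σ²/(N·B) + d·C²/(N·2^{2b}). -/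
/-!
A function with `ν`-Lipschitz gradient satisfies the descent inequality
`F y ≤ F x + ⟪∇F x, y - x⟫ + ν/2 ‖y - x‖²`. Applied along `θ_{t+1} = θ_t - (η/N) G_t` and
integrated, unbiasedness and the second-moment bound give, since `νη ≤ 1`,
`E F(θ_{t+1}) ≤ E F(θ_t) - η/2 E‖∇F(θ_t)‖² + η/2 V` with `V = σ²/(NB) + dC²/(N 2^{2b})`.
Summing over `t < T` telescopes, and `F(θ_T) ≥ F(θ*)` bounds the right end.
-/

open MeasureTheory Finset

section

variable {Ω E : Type*} [MeasurableSpace Ω] {μ : Measure Ω} [NormedAddCommGroup E]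
  [InnerProductSpace ℝ E]

theorem integrable_inner_of_integral_inner_eq_mul {u v : Ω → E} {c : ℝ} (hc : c ≠ 0)
    (hu : Integrable (fun ω => ‖u ω‖ ^ 2) μ)
    (h : ∫ ω, inner ℝ (u ω) (v ω) ∂μ = c * ∫ ω, ‖u ω‖ ^ 2 ∂μ) :
    Integrable (fun ω => inner ℝ (u ω) (v ω)) μ := by
  -- otherwise the left side of `h` is the junk value `0`, which forces `u = 0` a.e.
  by_contra hnot
  rw [integral_undef hnot, zero_eq_mul, or_iff_right hc,
    integral_eq_zero_iff_of_nonneg (fun ω => by positivity) hu] at h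
  refine hnot ((integrable_zero Ω ℝ μ).congr ?_)
  filter_upwards [h] with ω hω
  simp_all

variable [CompleteSpace E] {F : E → ℝ} {ν : ℝ}

theorem hasDerivAt_comp_add_smul (hF : Differentiable ℝ F) (x v : E) (s : ℝ) :
    HasDerivAt (fun s : ℝ => F (x + s • v)) (inner ℝ (gradient F (x + s • v)) v) s := by
  have hline : HasDerivAt (fun s : ℝ => x + s • v) v s := by
    simpa using ((hasDerivAt_id s).smul_const v).const_add x
  refine ((hasGradientAt_iff_hasFDerivAt.mp (hF _).hasGradientAt).comp_hasDerivAt s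
    hline).congr_deriv ?_
  simp

theorem inner_gradient_add_smul_sub_le
    (hlip : ∀ x y, ‖gradient F x - gradient F y‖ ≤ ν * ‖x - y‖) (x v : E) {s : ℝ}
    (hs : 0 ≤ s) :
    inner ℝ (gradient F (x + s • v) - gradient F x) v ≤ ν * s * ‖v‖ ^ 2 :=
  calc inner ℝ (gradient F (x + s • v) - gradient F x) v
      ≤ ‖gradient F (x + s • v) - gradient F x‖ * ‖v‖ := real_inner_le_norm _ _
    _ ≤ ν * ‖(x + s • v) - x‖ * ‖v‖ := by gcongr; exact hlip _ _
    _ = ν * s * ‖v‖ ^ 2 := by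
      rw [add_sub_cancel_left, norm_smul, Real.norm_of_nonneg hs]; ring

theorem le_add_inner_gradient_add_sq (hF : Differentiable ℝ F)
    (hlip : ∀ x y, ‖gradient F x - gradient F y‖ ≤ ν * ‖x - y‖) (x y : E) :
    F y ≤ F x + inner ℝ (gradient F x) (y - x) + ν / 2 * ‖y - x‖ ^ 2 := by
  set v := y - x
  let φ : ℝ → ℝ := fun s =>
    F (x + s • v) - s * inner ℝ (gradient F x) v - ν / 2 * s ^ 2 * ‖v‖ ^ 2
  have hφ' : ∀ s, HasDerivAt φ
      (inner ℝ (gradient F (x + s • v)) v - inner ℝ (gradient F x) v - ν * s * ‖v‖ ^ 2) s := by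
    intro s
    have hquad := ((hasDerivAt_pow 2 s).const_mul (ν / 2)).mul_const (‖v‖ ^ 2)
    exact (((hasDerivAt_comp_add_smul hF x v s).sub
      ((hasDerivAt_id s).mul_const (inner ℝ (gradient F x) v))).sub hquad).congr_deriv
      (by ring)
  have hanti : AntitoneOn φ (Set.Icc 0 1) := by
    refine antitoneOn_of_hasDerivWithinAt_nonpos (convex_Icc 0 1)
      (fun s _ => (hφ' s).continuousAt.continuousWithinAt)
      (fun s _ => (hφ' s).hasDerivWithinAt) fun s hs => ?_
    rw [interior_Icc] at hs
    have hgrad_sub := inner_gradient_add_smul_sub_le hlip x v hs.1.le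
    rw [inner_sub_left] at hgrad_sub
    linarith
  have h01 := hanti (by simp) (by simp) zero_le_one
  simp only [φ, zero_smul, add_zero, one_smul, add_sub_cancel, v] at h01
  linarith

theorem integral_comp_sub_smul_le_s15 (hF : Differentiable ℝ F)
    (hlip : ∀ x y, ‖gradient F x - gradient F y‖ ≤ ν * ‖x - y‖) {x x' g : Ω → E} {α : ℝ}
    (hupdate : ∀ᵐ ω ∂μ, x' ω = x ω - α • g ω)
    (hFx : Integrable (fun ω => F (x ω)) μ) (hFx' : Integrable (fun ω => F (x' ω)) μ)
    (hinner : Integrable (fun ω => inner ℝ (gradient F (x ω)) (g ω)) μ)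
    (hg : Integrable (fun ω => ‖g ω‖ ^ 2) μ) :
    ∫ ω, F (x' ω) ∂μ ≤ ∫ ω, F (x ω) ∂μ - α * ∫ ω, inner ℝ (gradient F (x ω)) (g ω) ∂μ
      + ν / 2 * α ^ 2 * ∫ ω, ‖g ω‖ ^ 2 ∂μ := by
  have hpointwise : ∀ᵐ ω ∂μ, F (x' ω) ≤ F (x ω) - α * inner ℝ (gradient F (x ω)) (g ω)
      + ν / 2 * α ^ 2 * ‖g ω‖ ^ 2 := by
    filter_upwards [hupdate] with ω hω
    rw [hω]
    have h := le_add_inner_gradient_add_sq hF hlip (x ω) (x ω - α • g ω)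
    rwa [sub_sub_cancel_left, inner_neg_right, real_inner_smul_right, norm_neg, norm_smul,
      mul_pow, Real.norm_eq_abs, sq_abs, ← sub_eq_add_neg, ← mul_assoc] at h
  have hdrift : Integrable (fun ω => α * inner ℝ (gradient F (x ω)) (g ω)) μ :=
    hinner.const_mul α
  have hdescent : Integrable (fun ω => F (x ω) - α * inner ℝ (gradient F (x ω)) (g ω)) μ :=
    hFx.sub hdrift
  have hnoise : Integrable (fun ω => ν / 2 * α ^ 2 * ‖g ω‖ ^ 2) μ := hg.const_mul _
  calc ∫ ω, F (x' ω) ∂μ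
      ≤ ∫ ω, F (x ω) - α * inner ℝ (gradient F (x ω)) (g ω) + ν / 2 * α ^ 2 * ‖g ω‖ ^ 2 ∂μ :=
        integral_mono_ae hFx' (hdescent.add hnoise) hpointwise
    _ = _ := by
      rw [integral_add hdescent hnoise, integral_sub hFx hdrift, integral_const_mul,
        integral_const_mul]

theorem integral_comp_le_of_unbiased_step (hF : Differentiable ℝ F)
    (hlip : ∀ x y, ‖gradient F x - gradient F y‖ ≤ ν * ‖x - y‖) (hν : 0 ≤ ν)
    {x x' g : Ω → E} {c η V : ℝ} (hc : c ≠ 0) (hη : 0 ≤ η) (hνη : ν * η ≤ 1) (hV : 0 ≤ V)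
    (hupdate : ∀ᵐ ω ∂μ, x' ω = x ω - (η / c) • g ω)
    (hFx : Integrable (fun ω => F (x ω)) μ) (hFx' : Integrable (fun ω => F (x' ω)) μ)
    (hgrad : Integrable (fun ω => ‖gradient F (x ω)‖ ^ 2) μ)
    (hg : Integrable (fun ω => ‖g ω‖ ^ 2) μ)
    (hmean : ∫ ω, inner ℝ (gradient F (x ω)) (g ω) ∂μ = c * ∫ ω, ‖gradient F (x ω)‖ ^ 2 ∂μ)
    (hsecond : ∫ ω, ‖g ω‖ ^ 2 ∂μ ≤ c ^ 2 * ∫ ω, ‖gradient F (x ω)‖ ^ 2 ∂μ + c ^ 2 * V) :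
    ∫ ω, F (x' ω) ∂μ
      ≤ ∫ ω, F (x ω) ∂μ - η / 2 * ∫ ω, ‖gradient F (x ω)‖ ^ 2 ∂μ + η / 2 * V := by
  have hstep := integral_comp_sub_smul_le_s15 hF hlip hupdate hFx hFx'
    (integrable_inner_of_integral_inner_eq_mul hc hgrad hmean) hg
  set S := ∫ ω, ‖gradient F (x ω)‖ ^ 2 ∂μ
  have hS : 0 ≤ S := integral_nonneg fun ω => by positivity
  have hdrift : η / c * (c * S) = η * S := by field_simp
  have hnoise : ν / 2 * (η / c) ^ 2 * ∫ ω, ‖g ω‖ ^ 2 ∂μ ≤ η / 2 * (S + V) :=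
    calc ν / 2 * (η / c) ^ 2 * ∫ ω, ‖g ω‖ ^ 2 ∂μ
        ≤ ν / 2 * (η / c) ^ 2 * (c ^ 2 * S + c ^ 2 * V) := by gcongr
      _ = ν * η * (η / 2 * (S + V)) := by field_simp
      _ ≤ 1 * (η / 2 * (S + V)) := by gcongr
      _ = η / 2 * (S + V) := one_mul _
  rw [hmean, hdrift] at hstep
  linarith

theorem sum_range_le_sub_add_of_le_sub {a g : ℕ → ℝ} {K : ℝ} {T : ℕ}
    (h : ∀ t < T, a (t + 1) ≤ a t - g t + K) :
    ∑ t ∈ range T, g t ≤ a 0 - a T + T * K := by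
  have hterm : ∀ t ∈ range T, g t ≤ (a t - a (t + 1)) + K := fun t ht => by
    linarith [h t (mem_range.mp ht)]
  grw [sum_le_sum hterm, sum_add_distrib, sum_range_sub', sum_const, card_range, nsmul_eq_mul]

end

theorem flag_convergence_general {Ω : Type*} [MeasurableSpace Ω]
    (μ : Measure Ω) [IsProbabilityMeasure μ]
    (d : ℕ) (F : EuclideanSpace ℝ (Fin d) → ℝ) (ν : ℝ)
    (hF : Differentiable ℝ F)
    (hlip : ∀ x y, ‖gradient F x - gradient F y‖ ≤ ν * ‖x - y‖)
    (θstar : EuclideanSpace ℝ (Fin d)) (hbelow : ∀ x, F θstar ≤ F x)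
    (N B b T : ℕ) (hN : 0 < N) (hT : 0 < T)
    (σ C : ℝ) (η : ℝ) (hη : 0 < η) (hην : η ≤ 1 / ν)
    (θ₀ : EuclideanSpace ℝ (Fin d))
    (θ G : ℕ → Ω → EuclideanSpace ℝ (Fin d))
    (hθ₀ : ∀ ω, θ 0 ω = θ₀)
    (hupdate : ∀ t < T, ∀ᵐ ω ∂μ, θ (t + 1) ω = θ t ω - (η / N) • G t ω)
    (hFint : ∀ t ≤ T, Integrable (fun ω => F (θ t ω)) μ)
    (hgradint : ∀ t < T, Integrable (fun ω => ‖gradient F (θ t ω)‖ ^ 2) μ)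
    (hGint : ∀ t < T, Integrable (fun ω => ‖G t ω‖ ^ 2) μ)
    (hmean : ∀ t < T,
      ∫ ω, (inner ℝ (gradient F (θ t ω)) (G t ω) : ℝ) ∂μ
        = N * ∫ ω, ‖gradient F (θ t ω)‖ ^ 2 ∂μ)
    (hsecond : ∀ t < T,
      ∫ ω, ‖G t ω‖ ^ 2 ∂μ
        ≤ (N : ℝ) ^ 2 * (∫ ω, ‖gradient F (θ t ω)‖ ^ 2 ∂μ)
          + N * σ ^ 2 / B + d * N * C ^ 2 / 2 ^ (2 * b)) :
    (1 / T : ℝ) * ∑ t ∈ Finset.range T, ∫ ω, ‖gradient F (θ t ω)‖ ^ 2 ∂μ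
      ≤ 2 * (F θ₀ - F θstar) / (T * η) + σ ^ 2 / (N * B)
        + d * C ^ 2 / (N * 2 ^ (2 * b)) := by
  have hν : 0 < ν := one_div_pos.mp (hη.trans_le hην)
  have hνη : ν * η ≤ 1 := by rwa [le_div_iff₀' hν] at hην
  have hN' : (N : ℝ) ≠ 0 := by positivity
  set V : ℝ := σ ^ 2 / (N * B) + d * C ^ 2 / (N * 2 ^ (2 * b))
  have hnoise : (N : ℝ) * σ ^ 2 / B + d * N * C ^ 2 / 2 ^ (2 * b) = N ^ 2 * V := by
    simp only [V]
    field_simp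
  have hstep : ∀ t < T, ∫ ω, F (θ (t + 1) ω) ∂μ
      ≤ ∫ ω, F (θ t ω) ∂μ - η / 2 * ∫ ω, ‖gradient F (θ t ω)‖ ^ 2 ∂μ + η / 2 * V :=
    fun t ht => integral_comp_le_of_unbiased_step hF hlip hν.le hN' hη.le hνη (by positivity)
      (hupdate t ht) (hFint t ht.le) (hFint (t + 1) ht) (hgradint t ht) (hGint t ht)
      (hmean t ht) (by rw [← hnoise, ← add_assoc]; exact hsecond t ht)
  have hsum := sum_range_le_sub_add_of_le_sub (a := fun t => ∫ ω, F (θ t ω) ∂μ)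
    (g := fun t => η / 2 * ∫ ω, ‖gradient F (θ t ω)‖ ^ 2 ∂μ) hstep
  have hstart : ∫ ω, F (θ 0 ω) ∂μ = F θ₀ := by simp [hθ₀]
  have hend : F θstar ≤ ∫ ω, F (θ T ω) ∂μ := by
    simpa using integral_mono (integrable_const _) (hFint T le_rfl) fun ω => hbelow (θ T ω)
  rw [← mul_sum, hstart] at hsum
  rw [add_assoc]
  calc (1 / T : ℝ) * ∑ t ∈ range T, ∫ ω, ‖gradient F (θ t ω)‖ ^ 2 ∂μ
      = 2 / (T * η) * (η / 2 * ∑ t ∈ range T, ∫ ω, ‖gradient F (θ t ω)‖ ^ 2 ∂μ) := by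
        field_simp
    _ ≤ 2 / (T * η) * (F θ₀ - F θstar + T * (η / 2 * V)) := by gcongr; linarith
    _ = 2 * (F θ₀ - F θstar) / (T * η) + V := by field_simp

/-- Convergence of FLAG (Theorem 1): for a `ν`-smooth objective `F` bounded below by
`F(θ*)`, step size `0 < η ≤ 1/ν`, and aggregated gradients `G_t` that are unbiased for
`N·∇F(θ_t)` with second moment at most `N²·E‖∇F(θ_t)‖² + Nσ²/B + dNC²/2^{2b}`, the
iterates `θ_{t+1} = θ_t − (η/N)·G_t` satisfy
`(1/T)·Σ_{t<T} E‖∇F(θ_t)‖² ≤ 2(F(θ₀) − F(θ*))/(Tη) + σ²/(NB) + dC²/(N·2^{2b})`. -/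
theorem flag_convergence {Ω : Type*} [MeasurableSpace Ω]
    (μ : Measure Ω) [IsProbabilityMeasure μ]
    (d : ℕ) (F : EuclideanSpace ℝ (Fin d) → ℝ) (ν : ℝ) (hν : 0 < ν)
    (hF : Differentiable ℝ F)
    (hlip : ∀ x y, ‖gradient F x - gradient F y‖ ≤ ν * ‖x - y‖)
    (θstar : EuclideanSpace ℝ (Fin d)) (hbelow : ∀ x, F θstar ≤ F x)
    (N B b T : ℕ) (hN : 0 < N) (hB : 0 < B) (hb : 0 < b) (hT : 0 < T)
    (σ C : ℝ) (hσ : 0 ≤ σ) (hC : 0 ≤ C) (η : ℝ) (hη : 0 < η) (hην : η ≤ 1 / ν)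
    (θ₀ : EuclideanSpace ℝ (Fin d))
    (θ G : ℕ → Ω → EuclideanSpace ℝ (Fin d))
    (hθ₀ : ∀ ω, θ 0 ω = θ₀)
    (hupdate : ∀ t < T, ∀ᵐ ω ∂μ, θ (t + 1) ω = θ t ω - (η / N) • G t ω)
    (hFint : ∀ t ≤ T, Integrable (fun ω => F (θ t ω)) μ)
    (hgradint : ∀ t < T, Integrable (fun ω => ‖gradient F (θ t ω)‖ ^ 2) μ)
    (hGint : ∀ t < T, Integrable (fun ω => ‖G t ω‖ ^ 2) μ)
    (hmean : ∀ t < T,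
      ∫ ω, (inner ℝ (gradient F (θ t ω)) (G t ω) : ℝ) ∂μ
        = N * ∫ ω, ‖gradient F (θ t ω)‖ ^ 2 ∂μ)
    (hsecond : ∀ t < T,
      ∫ ω, ‖G t ω‖ ^ 2 ∂μ
        ≤ (N : ℝ) ^ 2 * (∫ ω, ‖gradient F (θ t ω)‖ ^ 2 ∂μ)
          + N * σ ^ 2 / B + d * N * C ^ 2 / 2 ^ (2 * b)) :
    (1 / T : ℝ) * ∑ t ∈ Finset.range T, ∫ ω, ‖gradient F (θ t ω)‖ ^ 2 ∂μ
      ≤ 2 * (F θ₀ - F θstar) / (T * η) + σ ^ 2 / (N * B)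
        + d * C ^ 2 / (N * 2 ^ (2 * b)) :=
  flag_convergence_general μ d F ν hF hlip θstar hbelow N B b T hN hT σ C η hη hην θ₀ θ G hθ₀
    hupdate hFint hgradint hGint hmean hsecond
end
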